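/- arXiv:1602.01306 — 2 statements merged into one kernel-verified Lean document; each statement's English description precedes it below -/
import Mathlib

section
/- Let M be a matroid on a finite ground set E and let A ⊆ E. Then a set F ⊆ E is a maximum-cardinality member of the family {A △ B : B a base of M} if and only if F − A is a base of the restriction of M to E − A and A − F is a base of the contraction M/(E − A). (Equivalently, with D = M*A, the upper matroid satisfies D_max = (M restricted to E − A) ⊕ (M/(E − A))^*.) -/
/-!
Since `|A ∆ B| + |B| = |A| + 2 |B \ A|` and all bases have the same size, `A ∆ B` is as large
as possible exactly when `B \ A` is, i.e. when `B \ A` is a basis of `E \ A`. Writing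
`B = A ∆ F = (F \ A) ∪ (A \ F)`, a set `A \ F` disjoint from `E \ A` extends the basis `F \ A`
of `E \ A` to a base of `M` exactly when it is a base of `M / (E \ A)`.
-/

open scoped symmDiff Matroid

namespace PaperMatroid

variable {α : Type}

/-- The contraction `M/C`, defined via duality: `M/C = (M✶ ∖ C)✶`. -/
def contr (M : Matroid α) (C : Set α) : Matroid α := (M✶ ↾ (M.E \ C))✶

/-- The rank of a set `X`: the size of a largest independent subset of `X`. -/
noncomputable def rkFn (M : Matroid α) (X : Set α) : ℕ :=
  sSup {n : ℕ | ∃ I, M.Indep I ∧ I ⊆ X ∧ n = I.ncard}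

/-- `F` is a minimum-cardinality member of the twist family `{A ∆ B : B a base of M}`. -/
def MinTwistMem (M : Matroid α) (A F : Set α) : Prop :=
  (∃ B, M.IsBase B ∧ F = A ∆ B) ∧
    ∀ F', (∃ B, M.IsBase B ∧ F' = A ∆ B) → F.ncard ≤ F'.ncard

/-- `F` is a maximum-cardinality member of the twist family `{A ∆ B : B a base of M}`. -/
def MaxTwistMem (M : Matroid α) (A F : Set α) : Prop :=
  (∃ B, M.IsBase B ∧ F = A ∆ B) ∧
    ∀ F', (∃ B, M.IsBase B ∧ F' = A ∆ B) → F'.ncard ≤ F.ncard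

/-- A circuit of `M`: a minimal dependent set. -/
def IsCircuit (M : Matroid α) (C : Set α) : Prop :=
  C ⊆ M.E ∧ ¬ M.Indep C ∧ ∀ X, X ⊂ C → M.Indep X

/-- The circuit space of `M`: all disjoint unions of circuits (including `∅`). -/
def CircuitSpace (M : Matroid α) : Set (Set α) :=
  {X | ∃ 𝒞 : Finset (Set α), (∀ C ∈ 𝒞, IsCircuit M C) ∧
        (↑𝒞 : Set (Set α)).Pairwise Disjoint ∧ X = ⋃₀ ↑𝒞}

/-- The bicycle space of `M`: the intersection of the circuit space and the
cocircuit space (the circuit space of the dual). -/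
def BicycleSpace (M : Matroid α) : Set (Set α) := CircuitSpace M ∩ CircuitSpace M✶

/-- A matroid is bipartite if every circuit has even cardinality. -/
def Bipartite (M : Matroid α) : Prop := ∀ C, IsCircuit M C → Even C.ncard

/-- A matroid is Eulerian if its ground set is a disjoint union of circuits. -/
def Eulerian (M : Matroid α) : Prop :=
  ∃ 𝒞 : Finset (Set α), (∀ C ∈ 𝒞, IsCircuit M C) ∧
    (↑𝒞 : Set (Set α)).Pairwise Disjoint ∧ ⋃₀ ↑𝒞 = M.E

/-- Representability of a matroid over a field `K`: there is a map of the ground set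
into a `K`-vector space under which a set is independent exactly when its image is
linearly independent. -/
def IsRepresentableOver (M : Matroid α) (K : Type) [Field K] : Prop :=
  ∃ (V : Type) (_ : AddCommGroup V) (_ : Module K V) (φ : α → V),
    ∀ I, I ⊆ M.E → (M.Indep I ↔ LinearIndependent K (I.restrict φ))

/-- A binary matroid: one representable over `GF(2)`. -/
def Binary (M : Matroid α) : Prop := IsRepresentableOver M (ZMod 2)

end PaperMatroid

open Set

lemma Set.ncard_symmDiff_add_ncard {α : Type*} {A B : Set α} (hA : A.Finite) (hB : B.Finite) :
    (A ∆ B).ncard + B.ncard = A.ncard + 2 * (B \ A).ncard := by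
  have hAB : (A ∆ B).ncard = (A \ B).ncard + (B \ A).ncard := by
    rw [symmDiff_def]
    exact ncard_union_eq disjoint_sdiff_sdiff hA.sdiff hB.sdiff
  have hA' := ncard_inter_add_ncard_sdiff_eq_ncard A B hA
  have hB' := ncard_inter_add_ncard_sdiff_eq_ncard B A hB
  rw [inter_comm] at hB'
  omega

namespace Matroid

variable {α : Type*} {M : Matroid α} {A B B' I J X : Set α}

lemma IsBasis.contract_isBase_iff (hI : M.IsBasis I X) :
    (M ／ X).IsBase J ↔ M.IsBase (J ∪ I) ∧ Disjoint J X := by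
  refine ⟨fun hJ ↦ ⟨?_, (subset_sdiff.1 hJ.subset_ground).2⟩, fun ⟨hJI, hJX⟩ ↦ ?_⟩
  · have hindep := (hI.contract_indep_iff.1 hJ.indep).1
    rw [← isBasis_ground_iff]
    refine hindep.isBasis_of_subset_of_subset_closure hindep.subset_ground fun e he ↦ ?_
    by_cases heX : e ∈ X
    · exact M.closure_subset_closure subset_union_right (hI.subset_closure heX)
    by_cases heJ : e ∈ J
    · exact M.mem_closure_of_mem (Or.inl heJ) hindep.subset_ground
    have hdep := (hI.contract_dep_iff.1 (hJ.insert_dep ⟨⟨he, heX⟩, heJ⟩)).1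
    rw [insert_union] at hdep
    exact (hindep.insert_dep_iff.1 hdep).1
  · have hJ : (J ∪ I) \ X = J := by
      rw [union_sdiff_distrib, hJX.sdiff_eq_left, sdiff_eq_empty.2 hI.subset, union_empty]
    have h := hJI.isBasis_ground.contract_isBasis hI (by rw [hJ]; exact hJI.indep)
    rwa [hJ, ← contract_ground, isBasis_ground_iff] at h

lemma IsBase.isBasis_sdiff_iff [M.RankFinite] (hB : M.IsBase B) :
    M.IsBasis (B \ A) (M.E \ A) ↔ ∀ B', M.IsBase B' → (B' \ A).ncard ≤ (B \ A).ncard := by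
  have hfin : (B \ A).Finite := hB.finite.sdiff
  refine ⟨fun hbasis B' hB' ↦ ?_, fun h ↦ ?_⟩
  · have hle := (hB'.indep.subset sdiff_subset).encard_le_eRk_of_subset
      (sdiff_subset_sdiff_left (t := A) hB'.subset_ground)
    rw [← hbasis.encard_eq_eRk, ← hB'.finite.sdiff.cast_ncard_eq, ← hfin.cast_ncard_eq] at hle
    exact_mod_cast hle
  obtain ⟨I, hI⟩ := M.exists_isBasis (M.E \ A)
  obtain ⟨B₀, hB₀, hIB₀⟩ := hI.indep.exists_isBase_superset
  have hIB₀A : I ⊆ B₀ \ A := subset_sdiff.2 ⟨hIB₀, (subset_sdiff.1 hI.subset).2⟩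
  refine (hB.indep.subset sdiff_subset).isBasis_of_eRk_ge hfin
    (sdiff_subset_sdiff_left hB.subset_ground) ?_
  calc M.eRk (M.E \ A) = I.encard := hI.encard_eq_eRk.symm
    _ ≤ (B₀ \ A).encard := encard_le_encard hIB₀A
    _ ≤ (B \ A).encard := by
      rw [← hB₀.finite.sdiff.cast_ncard_eq, ← hfin.cast_ncard_eq]
      exact_mod_cast h B₀ hB₀
    _ = M.eRk (B \ A) := ((hB.indep.subset sdiff_subset).eRk_eq_encard).symm

lemma IsBase.ncard_symmDiff_le_iff [M.RankFinite] (hA : A.Finite) (hB : M.IsBase B)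
    (hB' : M.IsBase B') : (A ∆ B').ncard ≤ (A ∆ B).ncard ↔ (B' \ A).ncard ≤ (B \ A).ncard := by
  have hAB := ncard_symmDiff_add_ncard hA hB.finite
  have hAB' := ncard_symmDiff_add_ncard hA hB'.finite
  have hcard := hB.ncard_eq_ncard_of_isBase hB'
  omega

end Matroid

namespace PaperMatroid

open Matroid

variable {α : Type} {M : Matroid α} {A F : Set α}

lemma contr_eq_contract (M : Matroid α) (C : Set α) : contr M C = M ／ C := rfl

lemma maxTwistMem_iff_isBase_symmDiff :
    MaxTwistMem M A F ↔ M.IsBase (A ∆ F) ∧ ∀ B, M.IsBase B → (A ∆ B).ncard ≤ F.ncard := by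
  refine ⟨?_, fun ⟨hF, h⟩ ↦ ⟨⟨_, hF, (symmDiff_symmDiff_cancel_left A F).symm⟩, ?_⟩⟩
  · rintro ⟨⟨B, hB, rfl⟩, h⟩
    rw [symmDiff_symmDiff_cancel_left]
    exact ⟨hB, fun B' hB' ↦ h _ ⟨B', hB', rfl⟩⟩
  · rintro _ ⟨B, hB, rfl⟩
    exact h B hB

lemma maxTwistMem_iff_isBase_and_isBasis [M.RankFinite] (hA : A.Finite) :
    MaxTwistMem M A F ↔ M.IsBase (A ∆ F) ∧ M.IsBasis (F \ A) (M.E \ A) := by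
  rw [maxTwistMem_iff_isBase_symmDiff]
  refine and_congr_right fun hB ↦ ?_
  rw [← symmDiff_sdiff_left, hB.isBasis_sdiff_iff]
  refine forall₂_congr fun B' hB' ↦ ?_
  rw [← hB.ncard_symmDiff_le_iff hA hB', symmDiff_symmDiff_cancel_left]

lemma isBase_restrict_and_contr_iff :
    (M ↾ (M.E \ A)).IsBase (F \ A) ∧ (contr M (M.E \ A)).IsBase (A \ F) ↔
      M.IsBasis (F \ A) (M.E \ A) ∧ M.IsBase (A ∆ F) := by
  rw [isBase_restrict_iff]
  refine and_congr_right fun hI ↦ ?_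
  rw [contr_eq_contract, hI.contract_isBase_iff, Set.symmDiff_def,
    and_iff_left (disjoint_sdiff_right.mono_left sdiff_subset)]

theorem maxTwistMem_iff_general (M : Matroid α) [M.Finite] (A : Set α) (hA : A ⊆ M.E)
    (F : Set α) :
    MaxTwistMem M A F ↔ (M ↾ (M.E \ A)).IsBase (F \ A) ∧ (contr M (M.E \ A)).IsBase (A \ F) := by
  rw [maxTwistMem_iff_isBase_and_isBasis (M.ground_finite.subset hA),
    isBase_restrict_and_contr_iff, and_comm]

/-- `F` is a maximum-cardinality member of `{A ∆ B : B a base of M}` iff `F − A` is a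
base of the restriction of `M` to `E − A` and `A − F` is a base of `M/(E − A)`. -/
theorem maxTwistMem_iff (M : Matroid α) [M.Finite] (A : Set α) (hA : A ⊆ M.E)
    (F : Set α) (hF : F ⊆ M.E) :
    MaxTwistMem M A F ↔ (M ↾ (M.E \ A)).IsBase (F \ A) ∧ (contr M (M.E \ A)).IsBase (A \ F) :=
  maxTwistMem_iff_general M A hA F

end PaperMatroid
end

section
/- Let D = (E,𝓕) be a vf-safe delta-matroid and let e ∈ E. Then: (1) e is a ribbon loop of D if and only if e is a ribbon loop of D+e; (2) a ribbon loop e is non-orientable in D if and only if it is orientable in D+e; (3) a ribbon loop e is trivial in D if and only if it is trivial in D+e; and (4) e is a coloop of D if and only if e is a coloop of D+e. -/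
open scoped symmDiff

structure SetSystem (α : Type) [DecidableEq α] where
  E : Finset α
  F : Finset (Finset α)

namespace SetSystem

variable {α : Type} [DecidableEq α]

/-- A delta-matroid: nonempty collection of feasible subsets of the ground set
satisfying the symmetric exchange axiom. -/
def IsDeltaMatroid (D : SetSystem α) : Prop :=
  D.F.Nonempty ∧ (∀ F ∈ D.F, F ⊆ D.E) ∧
    ∀ X ∈ D.F, ∀ Y ∈ D.F, ∀ u ∈ X ∆ Y, ∃ v ∈ X ∆ Y, X ∆ ({u, v} : Finset α) ∈ D.F

/-- A matroid, viewed as a delta-matroid whose feasible sets are equicardinal. -/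
def IsMatroid (D : SetSystem α) : Prop :=
  D.IsDeltaMatroid ∧ ∀ F₁ ∈ D.F, ∀ F₂ ∈ D.F, F₁.card = F₂.card

/-- The twist `D*A`. -/
def twist (D : SetSystem α) (A : Finset α) : SetSystem α :=
  ⟨D.E, D.F.image fun F => A ∆ F⟩

/-- The dual `D* := D * E`. -/
def dual (D : SetSystem α) : SetSystem α := D.twist D.E

def IsLoop (D : SetSystem α) (e : α) : Prop := ∀ F ∈ D.F, e ∉ F

def IsColoop (D : SetSystem α) (e : α) : Prop := ∀ F ∈ D.F, e ∈ F

open Classical in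
/-- Deletion of a single element (when `e` is a coloop, `D∖e := D/e`). -/
noncomputable def del (D : SetSystem α) (e : α) : SetSystem α :=
  if D.IsColoop e then ⟨D.E.erase e, D.F.image fun F => F.erase e⟩
  else ⟨D.E.erase e, D.F.filter fun F => e ∉ F⟩

open Classical in
/-- Contraction of a single element (when `e` is a loop, `D/e := D∖e`). -/
noncomputable def con (D : SetSystem α) (e : α) : SetSystem α :=
  if D.IsLoop e then ⟨D.E.erase e, D.F.filter fun F => e ∉ F⟩
  else ⟨D.E.erase e, (D.F.filter fun F => e ∈ F).image fun F => F.erase e⟩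

/-- Loop complementation on a single element. -/
def lc (D : SetSystem α) (e : α) : SetSystem α :=
  ⟨D.E, D.F ∆ ((D.F.filter fun F => e ∉ F).image fun F => insert e F)⟩

/-- Loop complementation on a set of elements (applied in some order;
the operation is order-independent). -/
noncomputable def lcSet (D : SetSystem α) (A : Finset α) : SetSystem α :=
  A.toList.foldl lc D

/-- The dual pivot `D *̄ A := ((D*A)+A)*A`. -/
noncomputable def dpivot (D : SetSystem α) (A : Finset α) : SetSystem α :=
  ((D.twist A).lcSet A).twist A

/-- Set systems reachable from `D` by sequences of twists and loop complementations. -/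
inductive Reachable : SetSystem α → SetSystem α → Prop
  | refl (D : SetSystem α) : Reachable D D
  | twist (D D' : SetSystem α) (A : Finset α) (hA : A ⊆ D'.E) :
      Reachable D D' → Reachable D (D'.twist A)
  | lc (D D' : SetSystem α) (A : Finset α) (hA : A ⊆ D'.E) :
      Reachable D D' → Reachable D (D'.lcSet A)

/-- A vf-safe delta-matroid: any sequence of twists and loop complementations
yields a delta-matroid. -/
def VfSafe (D : SetSystem α) : Prop := ∀ D', Reachable D D' → D'.IsDeltaMatroid

/-- The minimum-cardinality feasible sets. -/
def Fmin (D : SetSystem α) : Finset (Finset α) :=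
  D.F.filter fun F => ∀ F' ∈ D.F, F.card ≤ F'.card

/-- The maximum-cardinality feasible sets. -/
def Fmax (D : SetSystem α) : Finset (Finset α) :=
  D.F.filter fun F => ∀ F' ∈ D.F, F'.card ≤ F.card

/-- The lower matroid `D_min`. -/
def Dmin (D : SetSystem α) : SetSystem α := ⟨D.E, D.Fmin⟩

def IsRibbonLoop (D : SetSystem α) (e : α) : Prop := ∀ F ∈ D.Fmin, e ∉ F

def IsNonorientableRL (D : SetSystem α) (e : α) : Prop :=
  D.IsRibbonLoop e ∧ (D.twist {e}).IsRibbonLoop e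

def IsOrientableRL (D : SetSystem α) (e : α) : Prop :=
  D.IsRibbonLoop e ∧ (D.dpivot {e}).IsRibbonLoop e

def IsTrivialOrientableRL (D : SetSystem α) (e : α) : Prop :=
  D.IsOrientableRL e ∧ D.IsLoop e

def IsTrivialNonorientableRL (D : SetSystem α) (e : α) : Prop :=
  D.IsNonorientableRL e ∧ (D.lc e).IsLoop e

/-!
Loop complementation on `e` only changes feasible sets containing `e`, and only by comparing `G`
with `G \ {e}`; since the minimum feasible sets of `D` avoid `e` when `e` is a ribbon loop, they
stay minimum in `D+e`. Everything else reduces to three identities of set systems: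
`(D+e)+e = D`, `(D+e)*̄{e} = (D*{e})+e`, and `D*̄{e} = D` when `e` is a loop of `D`
(which, applied to `D+e`, gives `D*{e} = D` when `e` is a loop of `D+e`).
-/

attribute [ext] SetSystem

section

variable {D : SetSystem α} {e : α} {G : Finset α}

theorem mem_lc : G ∈ (D.lc e).F ↔
    (G ∈ D.F ∧ ¬(e ∈ G ∧ G.erase e ∈ D.F)) ∨ ((e ∈ G ∧ G.erase e ∈ D.F) ∧ G ∉ D.F) := by
  have mem_image : (G ∈ (D.F.filter fun F => e ∉ F).image fun F => insert e F) ↔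
      (e ∈ G ∧ G.erase e ∈ D.F) := by
    simp only [Finset.mem_image, Finset.mem_filter]
    constructor
    · rintro ⟨F, ⟨hF, heF⟩, rfl⟩
      simpa [Finset.erase_insert heF] using hF
    · rintro ⟨heG, hG⟩
      exact ⟨G.erase e, ⟨hG, Finset.notMem_erase e G⟩, Finset.insert_erase heG⟩
  rw [lc, Finset.mem_symmDiff, mem_image]

theorem mem_lc_of_notMem (h : e ∉ G) : G ∈ (D.lc e).F ↔ G ∈ D.F := by
  simp [mem_lc, h]

theorem mem_twist {A : Finset α} : G ∈ (D.twist A).F ↔ A ∆ G ∈ D.F := by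
  simp only [twist, Finset.mem_image]
  constructor
  · rintro ⟨F, hF, rfl⟩
    rwa [symmDiff_symmDiff_cancel_left]
  · exact fun h => ⟨A ∆ G, h, symmDiff_symmDiff_cancel_left A G⟩

theorem mem_twist_singleton_of_mem (h : e ∈ G) : G ∈ (D.twist {e}).F ↔ G.erase e ∈ D.F := by
  rw [mem_twist]
  congr! 1
  ext a
  by_cases ha : a = e <;> simp [Finset.mem_symmDiff, ha, h]

theorem mem_twist_singleton_of_notMem (h : e ∉ G) :
    G ∈ (D.twist {e}).F ↔ insert e G ∈ D.F := by
  rw [mem_twist]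
  congr! 1
  ext a
  by_cases ha : a = e <;> simp [Finset.mem_symmDiff, ha, h]

theorem lc_lc (D : SetSystem α) (e : α) : (D.lc e).lc e = D := by
  ext1
  · rfl
  ext G
  by_cases heG : e ∈ G
  · rw [mem_lc, mem_lc, mem_lc_of_notMem (Finset.notMem_erase e G)]
    simp only [heG, true_and]
    tauto
  · rw [mem_lc_of_notMem heG, mem_lc_of_notMem heG]

theorem dpivot_singleton (D : SetSystem α) (e : α) :
    D.dpivot {e} = ((D.twist {e}).lc e).twist {e} := by
  simp [dpivot, lcSet, Finset.toList_singleton]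

theorem dpivot_singleton_lc (D : SetSystem α) (e : α) :
    (D.lc e).dpivot {e} = (D.twist {e}).lc e := by
  rw [dpivot_singleton]
  ext1
  · rfl
  ext G
  by_cases heG : e ∈ G
  · have heG' : e ∉ G.erase e := Finset.notMem_erase e G
    simp only [mem_twist_singleton_of_mem heG, mem_lc_of_notMem heG',
      mem_twist_singleton_of_notMem heG', mem_lc, Finset.insert_erase heG, heG, true_and]
    tauto
  · have heG' : e ∈ insert e G := Finset.mem_insert_self e G
    simp only [mem_twist_singleton_of_notMem heG, mem_lc, mem_twist_singleton_of_mem heG',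
      Finset.erase_insert heG, heG, heG', true_and, false_and]
    tauto

theorem dpivot_singleton_eq_self (h : D.IsLoop e) : D.dpivot {e} = D := by
  rw [dpivot_singleton]
  ext1
  · rfl
  ext G
  by_cases heG : e ∈ G
  · have heG' : e ∉ G.erase e := Finset.notMem_erase e G
    rw [mem_twist_singleton_of_mem heG, mem_lc_of_notMem heG',
      mem_twist_singleton_of_notMem heG', Finset.insert_erase heG]
  · have heG' : e ∈ insert e G := Finset.mem_insert_self e G
    have hG : insert e G ∉ D.F := fun hG => h _ hG heG'
    simp only [mem_twist_singleton_of_notMem heG, mem_lc, mem_twist_singleton_of_mem heG',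
      Finset.erase_insert heG, heG', true_and]
    tauto

theorem twist_singleton_eq_self (h : (D.lc e).IsLoop e) : D.twist {e} = D := by
  have h' := congrArg (lc · e) (dpivot_singleton_eq_self h)
  simpa only [dpivot_singleton_lc, lc_lc] using h'



theorem IsRibbonLoop.lc (h : D.IsRibbonLoop e) : (D.lc e).IsRibbonLoop e := by
  intro G hG heG
  obtain ⟨hG, hGmin⟩ := Finset.mem_filter.1 hG
  have hne : D.F.Nonempty := by
    rcases mem_lc.1 hG with ⟨hGF, -⟩ | ⟨⟨-, hGF⟩, -⟩ <;> exact ⟨_, hGF⟩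
  obtain ⟨F₀, hF₀, hF₀min⟩ := D.F.exists_min_image Finset.card hne
  have heF₀ : e ∉ F₀ := h F₀ (Finset.mem_filter.2 ⟨hF₀, hF₀min⟩)
  have hGF₀ : G.card ≤ F₀.card := hGmin F₀ ((mem_lc_of_notMem heF₀).2 hF₀)
  rcases mem_lc.1 hG with ⟨hGF, -⟩ | ⟨⟨-, hGeF⟩, -⟩
  · exact h G (Finset.mem_filter.2 ⟨hGF, fun F hF => hGF₀.trans (hF₀min F hF)⟩) heG
  · have := hF₀min _ hGeF
    have := Finset.card_erase_lt_of_mem heG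
    omega

theorem isRibbonLoop_lc_iff : (D.lc e).IsRibbonLoop e ↔ D.IsRibbonLoop e :=
  ⟨fun h => lc_lc D e ▸ h.lc, IsRibbonLoop.lc⟩

theorem isColoop_lc_iff : (D.lc e).IsColoop e ↔ D.IsColoop e := by
  constructor
  · intro h F hF
    by_contra heF
    exact heF (h F ((mem_lc_of_notMem heF).2 hF))
  · intro h G hG
    rcases mem_lc.1 hG with ⟨hGF, -⟩ | ⟨⟨heG, -⟩, -⟩
    · exact h G hGF
    · exact heG

theorem isOrientableRL_lc_iff : (D.lc e).IsOrientableRL e ↔ D.IsNonorientableRL e := by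
  rw [IsOrientableRL, IsNonorientableRL, dpivot_singleton_lc, isRibbonLoop_lc_iff,
    isRibbonLoop_lc_iff]

theorem IsLoop.isRibbonLoop (h : D.IsLoop e) : D.IsRibbonLoop e :=
  fun F hF => h F (Finset.mem_filter.1 hF).1

theorem isRibbonLoop_of_isLoop_lc (h : (D.lc e).IsLoop e) : D.IsRibbonLoop e := by
  intro F hF heF
  obtain ⟨hF, hFmin⟩ := Finset.mem_filter.1 hF
  have hFe : F.erase e ∈ D.F := by
    by_contra hFe
    exact h F (mem_lc.2 (Or.inl ⟨hF, fun h' => hFe h'.2⟩)) heF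
  have := hFmin _ hFe
  have := Finset.card_erase_lt_of_mem heF
  omega

theorem isTrivialOrientableRL_iff : D.IsTrivialOrientableRL e ↔ D.IsLoop e := by
  refine ⟨And.right, fun h => ⟨⟨h.isRibbonLoop, ?_⟩, h⟩⟩
  rw [dpivot_singleton_eq_self h]
  exact h.isRibbonLoop

theorem isTrivialNonorientableRL_iff : D.IsTrivialNonorientableRL e ↔ (D.lc e).IsLoop e := by
  refine ⟨And.right, fun h => ⟨⟨isRibbonLoop_of_isLoop_lc h, ?_⟩, h⟩⟩
  rw [twist_singleton_eq_self h]
  exact isRibbonLoop_of_isLoop_lc h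

end

theorem lc_ribbon_loops_general (D : SetSystem α) (e : α) :
    (D.IsRibbonLoop e ↔ (D.lc e).IsRibbonLoop e) ∧
    (D.IsRibbonLoop e → (D.IsNonorientableRL e ↔ (D.lc e).IsOrientableRL e)) ∧
    (D.IsRibbonLoop e →
      ((D.IsTrivialOrientableRL e ∨ D.IsTrivialNonorientableRL e) ↔
        ((D.lc e).IsTrivialOrientableRL e ∨ (D.lc e).IsTrivialNonorientableRL e))) ∧
    (D.IsColoop e ↔ (D.lc e).IsColoop e) := by
  refine ⟨isRibbonLoop_lc_iff.symm, fun _ => isOrientableRL_lc_iff.symm, fun _ => ?_,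
    isColoop_lc_iff.symm⟩
  simp only [isTrivialOrientableRL_iff, isTrivialNonorientableRL_iff, lc_lc]
  exact or_comm

/-- Behaviour of ribbon loops, their orientability and triviality, and coloops
under loop complementation. -/
theorem lc_ribbon_loops (D : SetSystem α) (hD : D.VfSafe) (e : α) (he : e ∈ D.E) :
    (D.IsRibbonLoop e ↔ (D.lc e).IsRibbonLoop e) ∧
    (D.IsRibbonLoop e → (D.IsNonorientableRL e ↔ (D.lc e).IsOrientableRL e)) ∧
    (D.IsRibbonLoop e →
      ((D.IsTrivialOrientableRL e ∨ D.IsTrivialNonorientableRL e) ↔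
        ((D.lc e).IsTrivialOrientableRL e ∨ (D.lc e).IsTrivialNonorientableRL e))) ∧
    (D.IsColoop e ↔ (D.lc e).IsColoop e) :=
  lc_ribbon_loops_general D e

end SetSystem
end
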